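/- Let α₁, α₂ ∈ (0,1] and β > γ > 0. Fix x₀, y₀ > 0, set ε = min(1/2, x₀/(2y₀)), and let T > 0 satisfy G(T)·(β+γ)·(1+ε) ≤ ε, where G(t) = max(t^{α₁}/Γ(α₁+1), t^{α₂}/Γ(α₂+1)). Let Q = [x₀−ε·y₀, x₀+ε·y₀] × [(1-ε)·y₀, (1+ε)·y₀]. If x, y : [0,T] → ℝ are continuous with (x(t),y(t)) ∈ Q for all t ∈ [0,T], then x̃(t) = x₀ + ∫₀ᵗ f(x(s),y(s))·(t-s)^{α₁-1}/Γ(α₁) ds and ỹ(t) = y₀ − ∫₀ᵗ f(x(s),y(s))·(t-s)^{α₂-1}/Γ(α₂) ds satisfy (x̃(t),ỹ(t)) ∈ Q for all t ∈ [0,T]. -/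

import Mathlib

/-!
On `[0, T]` the rate `f` is bounded by `(β + γ)(1 + ε) y₀` as long as `(x, y)` stays in `Q`: there
`x, y ≥ 0`, so `x / (x + y) ∈ [0, 1]` and `|γ - β x / (x + y)| ≤ β + γ`. The Riemann–Liouville
integral of order `α` of a function bounded by `M` is bounded by `M t^α / Γ(α + 1) ≤ M G(T)`, and the
choice of `T` makes this at most `ε y₀`, the half-width of `Q` in both coordinates.
-/

open intervalIntegral MeasureTheory Set

noncomputable def riemannLiouvilleIntegral (α : ℝ) (F : ℝ → ℝ) (t : ℝ) : ℝ :=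
  ∫ s in (0:ℝ)..t, F s * (t - s) ^ (α - 1) / Real.Gamma α

lemma intervalIntegrable_sub_rpow {α : ℝ} (hα : 0 < α) (t : ℝ) :
    IntervalIntegrable (fun s : ℝ => (t - s) ^ (α - 1)) volume 0 t := by
  have h : IntervalIntegrable (fun u : ℝ => u ^ (α - 1)) volume 0 t :=
    intervalIntegrable_rpow' (by linarith)
  simpa using (h.comp_sub_left t).symm

lemma integral_sub_rpow_sub_one {α : ℝ} (hα : 0 < α) (t : ℝ) :
    ∫ s in (0:ℝ)..t, (t - s) ^ (α - 1) = t ^ α / α := by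
  rw [integral_comp_sub_left (fun u : ℝ => u ^ (α - 1)) t, sub_self, sub_zero,
    integral_rpow (Or.inl (by linarith)), Real.zero_rpow (by linarith), sub_add_cancel, sub_zero]

lemma abs_riemannLiouvilleIntegral_le {α t M : ℝ} {F : ℝ → ℝ} (hα : 0 < α) (ht : 0 ≤ t)
    (hF : ∀ s ∈ Ioc 0 t, |F s| ≤ M) :
    |riemannLiouvilleIntegral α F t| ≤ M * t ^ α / Real.Gamma (α + 1) := by
  have hΓ : 0 < Real.Gamma α := Real.Gamma_pos_of_pos hα
  have hbound : ∀ᵐ s, s ∈ Ioc 0 t →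
      ‖F s * (t - s) ^ (α - 1) / Real.Gamma α‖ ≤ M * (t - s) ^ (α - 1) / Real.Gamma α := by
    refine Filter.Eventually.of_forall fun s hs => ?_
    have hkernel : 0 ≤ (t - s) ^ (α - 1) := Real.rpow_nonneg (by linarith [hs.2]) _
    rw [Real.norm_eq_abs, abs_div, abs_mul, abs_of_nonneg hkernel, abs_of_pos hΓ]
    gcongr
    exact hF s hs
  have hint := ((intervalIntegrable_sub_rpow hα t).const_mul M).div_const (Real.Gamma α)
  calc |riemannLiouvilleIntegral α F t|
      ≤ ∫ s in (0:ℝ)..t, M * (t - s) ^ (α - 1) / Real.Gamma α :=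
        norm_integral_le_of_norm_le ht hbound hint
    _ = M / Real.Gamma α * ∫ s in (0:ℝ)..t, (t - s) ^ (α - 1) := by
        rw [← intervalIntegral.integral_const_mul]; congr 1 with s; ring
    _ = M * t ^ α / Real.Gamma (α + 1) := by
        rw [integral_sub_rpow_sub_one hα, Real.Gamma_add_one hα.ne']; field_simp

lemma abs_riemannLiouvilleIntegral_le_of_le {α t T M : ℝ} {F : ℝ → ℝ} (hα : 0 < α)
    (ht : t ∈ Icc 0 T) (hM : 0 ≤ M) (hF : ∀ s ∈ Ioc 0 t, |F s| ≤ M) :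
    |riemannLiouvilleIntegral α F t| ≤ M * (T ^ α / Real.Gamma (α + 1)) := by
  have hΓ : 0 < Real.Gamma (α + 1) := Real.Gamma_pos_of_pos (by linarith)
  calc |riemannLiouvilleIntegral α F t| ≤ M * t ^ α / Real.Gamma (α + 1) :=
        abs_riemannLiouvilleIntegral_le hα ht.1 hF
    _ ≤ M * T ^ α / Real.Gamma (α + 1) := by gcongr; exacts [ht.1, ht.2]
    _ = M * (T ^ α / Real.Gamma (α + 1)) := mul_div_assoc _ _ _

lemma abs_sub_mul_div_add_mul_le {β γ x y : ℝ} (hβ : 0 ≤ β) (hγ : 0 ≤ γ) (hx : 0 ≤ x)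
    (hy : 0 ≤ y) : |(γ - β * x / (x + y)) * y| ≤ (β + γ) * y := by
  have hfrac : x / (x + y) ∈ Icc 0 1 := ⟨by positivity, div_le_one_of_le₀ (by linarith) (by positivity)⟩
  have hcoef : |γ - β * x / (x + y)| ≤ β + γ := by
    rw [mul_div_assoc, abs_le]
    constructor <;> nlinarith [hfrac.1, hfrac.2]
  rw [abs_mul, abs_of_nonneg hy]
  exact mul_le_mul_of_nonneg_right hcoef hy

theorem stmt4_general (α₁ α₂ β γ T x₀ y₀ : ℝ)
    (hα₁ : α₁ ∈ Set.Ioc (0:ℝ) 1) (hα₂ : α₂ ∈ Set.Ioc (0:ℝ) 1)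
    (hγ : 0 < γ) (hβγ : γ < β)
    (hx₀ : 0 < x₀) (hy₀ : 0 < y₀)
    (ε : ℝ) (hε : ε = min (1/2) (x₀ / (2 * y₀)))
    (G : ℝ → ℝ)
    (hG : ∀ t : ℝ, G t = max (t ^ α₁ / Real.Gamma (α₁ + 1)) (t ^ α₂ / Real.Gamma (α₂ + 1)))
    (hTcond : G T * (β + γ) * (1 + ε) ≤ ε)
    (f : ℝ → ℝ → ℝ) (hf : ∀ x y : ℝ, f x y = (γ - β * x / (x + y)) * y)
    (x y : ℝ → ℝ)
    (hQ : ∀ t ∈ Set.Icc (0:ℝ) T,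
      x t ∈ Set.Icc (x₀ - ε * y₀) (x₀ + ε * y₀) ∧
      y t ∈ Set.Icc ((1 - ε) * y₀) ((1 + ε) * y₀)) :
    ∀ t ∈ Set.Icc (0:ℝ) T,
      (x₀ + ∫ s in (0:ℝ)..t, f (x s) (y s) * (t - s) ^ (α₁ - 1) / Real.Gamma α₁)
        ∈ Set.Icc (x₀ - ε * y₀) (x₀ + ε * y₀) ∧
      (y₀ - ∫ s in (0:ℝ)..t, f (x s) (y s) * (t - s) ^ (α₂ - 1) / Real.Gamma α₂)
        ∈ Set.Icc ((1 - ε) * y₀) ((1 + ε) * y₀) := by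
  intro t ht
  have hε_pos : 0 < ε := hε ▸ lt_min (by norm_num) (by positivity)
  have hε_half : ε ≤ 1 / 2 := hε ▸ min_le_left _ _
  have hεy₀ : ε * y₀ ≤ x₀ / 2 := by
    have h := mul_le_mul_of_nonneg_right (hε ▸ min_le_right _ _ : ε ≤ x₀ / (2 * y₀)) hy₀.le
    rwa [div_mul_eq_mul_div, mul_div_mul_right _ _ hy₀.ne'] at h
  set M := (β + γ) * ((1 + ε) * y₀)
  have hM : 0 ≤ M := mul_nonneg (by linarith) (mul_nonneg (by linarith) hy₀.le)
  have hF : ∀ s ∈ Ioc 0 t, |f (x s) (y s)| ≤ M := by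
    intro s hs
    obtain ⟨⟨hx, -⟩, hy, hy'⟩ := hQ s ⟨hs.1.le, hs.2.trans ht.2⟩
    rw [hf]
    exact (abs_sub_mul_div_add_mul_le (by linarith) hγ.le (by linarith) (by nlinarith)).trans
      (mul_le_mul_of_nonneg_left hy' (by linarith))
  have hMG : ∀ g ≤ G T, M * g ≤ ε * y₀ := fun g hg =>
    calc M * g ≤ M * G T := mul_le_mul_of_nonneg_left hg hM
      _ = G T * (β + γ) * (1 + ε) * y₀ := by ring
      _ ≤ ε * y₀ := mul_le_mul_of_nonneg_right hTcond hy₀.le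
  have h₁ := abs_le.mp ((abs_riemannLiouvilleIntegral_le_of_le hα₁.1 ht hM hF).trans
    (hMG _ (hG T ▸ le_max_left _ _)))
  have h₂ := abs_le.mp ((abs_riemannLiouvilleIntegral_le_of_le hα₂.1 ht hM hF).trans
    (hMG _ (hG T ▸ le_max_right _ _)))
  unfold riemannLiouvilleIntegral at h₁ h₂
  constructor <;> constructor <;> linarith [h₁.1, h₁.2, h₂.1, h₂.2]

theorem stmt4 (α₁ α₂ β γ T x₀ y₀ : ℝ)
    (hα₁ : α₁ ∈ Set.Ioc (0:ℝ) 1) (hα₂ : α₂ ∈ Set.Ioc (0:ℝ) 1)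
    (hγ : 0 < γ) (hβγ : γ < β)
    (hx₀ : 0 < x₀) (hy₀ : 0 < y₀) (hT : 0 < T)
    (ε : ℝ) (hε : ε = min (1/2) (x₀ / (2 * y₀)))
    (G : ℝ → ℝ)
    (hG : ∀ t : ℝ, G t = max (t ^ α₁ / Real.Gamma (α₁ + 1)) (t ^ α₂ / Real.Gamma (α₂ + 1)))
    (hTcond : G T * (β + γ) * (1 + ε) ≤ ε)
    (f : ℝ → ℝ → ℝ) (hf : ∀ x y : ℝ, f x y = (γ - β * x / (x + y)) * y)
    (x y : ℝ → ℝ)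
    (hxc : ContinuousOn x (Set.Icc 0 T)) (hyc : ContinuousOn y (Set.Icc 0 T))
    (hQ : ∀ t ∈ Set.Icc (0:ℝ) T,
      x t ∈ Set.Icc (x₀ - ε * y₀) (x₀ + ε * y₀) ∧
      y t ∈ Set.Icc ((1 - ε) * y₀) ((1 + ε) * y₀)) :
    ∀ t ∈ Set.Icc (0:ℝ) T,
      (x₀ + ∫ s in (0:ℝ)..t, f (x s) (y s) * (t - s) ^ (α₁ - 1) / Real.Gamma α₁)
        ∈ Set.Icc (x₀ - ε * y₀) (x₀ + ε * y₀) ∧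
      (y₀ - ∫ s in (0:ℝ)..t, f (x s) (y s) * (t - s) ^ (α₂ - 1) / Real.Gamma α₂)
        ∈ Set.Icc ((1 - ε) * y₀) ((1 + ε) * y₀) :=
  stmt4_general α₁ α₂ β γ T x₀ y₀ hα₁ hα₂ hγ hβγ hx₀ hy₀ ε hε G hG hTcond f hf x y hQ
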